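/- arXiv:2209.05673 — 4 statements merged into one kernel-verified Lean document; each statement's English description precedes it below -/
import Mathlib

section
/- Let u_1, ..., u_{N-1}, u_N \geq 2 be positive integers and \Gamma \subset \{1, ..., N-1\} with \prod_{j \in \Gamma} u_j = u_N \prod_{j \in \Gamma^c} u_j. Fix k \in \Gamma such that u_j \neq u_k for all j \in \Gamma^c, and set u_{max} = \max_j u_j. Then u_{max}^{N-1} u_k^{N-1} \prod_{j \in \Gamma} |u_j - u_k^{-1}| \prod_{j \in \Gamma^c} |u_j^{-1} - u_k^{-1}| \geq u_{max}^{N-1} u_N \geq 2^N. -/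
/-- Given integers `u₁,…,u_N ≥ 2`, `Γ ⊆ {1,…,N-1}` with
`∏_{j∈Γ} u_j = u_N ∏_{j∈Γᶜ} u_j`, `k ∈ Γ` with `u_j ≠ u_k` for all `j ∈ Γᶜ`, and
`u_max = max{u₁,…,u_{N-1}}`, we have
`u_max^{N-1} u_k^{N-1} ∏_{j∈Γ} |u_j - u_k⁻¹| ∏_{j∈Γᶜ} |u_j⁻¹ - u_k⁻¹|
  ≥ u_max^{N-1} u_N ≥ 2^N`. -/
theorem stmt_9 (N : ℕ) (u : ℕ → ℕ) (hu : ∀ j ∈ Finset.Icc 1 N, 2 ≤ u j)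
    (Γ : Finset ℕ) (hΓ : Γ ⊆ Finset.Icc 1 (N - 1))
    (hpart : ∏ j ∈ Γ, u j = u N * ∏ j ∈ Finset.Icc 1 (N - 1) \ Γ, u j)
    (k : ℕ) (hk : k ∈ Γ)
    (hne : ∀ j ∈ Finset.Icc 1 (N - 1) \ Γ, u j ≠ u k)
    (umax : ℕ) (humax : umax = (Finset.Icc 1 (N - 1)).sup u) :
    ((umax : ℝ) ^ (N - 1) * (u k : ℝ) ^ (N - 1) *
        ((∏ j ∈ Γ, |(u j : ℝ) - (u k : ℝ)⁻¹|) *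
          ∏ j ∈ Finset.Icc 1 (N - 1) \ Γ, |(u j : ℝ)⁻¹ - (u k : ℝ)⁻¹|)
      ≥ (umax : ℝ) ^ (N - 1) * (u N : ℝ)) ∧
      (umax : ℝ) ^ (N - 1) * (u N : ℝ) ≥ 2 ^ N := by
  have hkS : k ∈ Finset.Icc 1 (N - 1) := hΓ hk
  have hk1 : 1 ≤ k ∧ k ≤ N - 1 := Finset.mem_Icc.mp hkS
  have hN2 : 2 ≤ N := by omega
  have hsub : ∀ j ∈ Finset.Icc 1 (N - 1), 2 ≤ u j := fun j hj => hu j (by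
    rw [Finset.mem_Icc] at hj ⊢; omega)
  have huk : 2 ≤ u k := hsub k hkS
  have huN : 2 ≤ u N := hu N (by rw [Finset.mem_Icc]; omega)
  have hukR : (2:ℝ) ≤ (u k : ℝ) := by exact_mod_cast huk
  have hukpos : (0:ℝ) < (u k : ℝ) := by linarith
  have humax2 : 2 ≤ umax := humax ▸ le_trans huk (Finset.le_sup hkS)
  have humaxR : (2:ℝ) ≤ (umax : ℝ) := by exact_mod_cast humax2
  -- part 2
  have part2 : (umax : ℝ) ^ (N - 1) * (u N : ℝ) ≥ 2 ^ N := by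
    have hpow : (2:ℝ) ^ N = 2 ^ (N - 1) * 2 := by
      rw [← pow_succ]; congr 1; omega
    rw [ge_iff_le, hpow]
    have h1 : (2:ℝ) ^ (N-1) ≤ (umax:ℝ) ^ (N-1) :=
      pow_le_pow_left₀ (by norm_num) humaxR _
    have h2 : (2:ℝ) ≤ (u N : ℝ) := by exact_mod_cast huN
    have h3 : (0:ℝ) < 2 ^ (N-1) := by positivity
    nlinarith
  refine ⟨?_, part2⟩
  -- card fact
  have hScard : (Finset.Icc 1 (N - 1)).card = N - 1 := by
    rw [Nat.card_Icc]; omega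
  have hcard : Γ.card + (Finset.Icc 1 (N - 1) \ Γ).card = N - 1 := by
    rw [Finset.card_sdiff_of_subset hΓ, hScard]
    have := Finset.card_le_card hΓ
    omega
  -- term bounds
  have hterm1 : ∀ j ∈ Γ, (u j : ℝ) ≤ (u k : ℝ) * |(u j : ℝ) - (u k : ℝ)⁻¹| := by
    intro j hj
    have huj : (2:ℝ) ≤ (u j : ℝ) := by exact_mod_cast hsub j (hΓ hj)
    have hinv : (u k : ℝ)⁻¹ ≤ 1 := by
      rw [inv_le_one_iff₀]; right; linarith
    have hinvpos : (0:ℝ) < (u k : ℝ)⁻¹ := by positivity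
    rw [abs_of_nonneg (by linarith)]
    have : (u k : ℝ) * ((u j : ℝ) - (u k : ℝ)⁻¹) = (u j : ℝ) * (u k : ℝ) - 1 := by
      field_simp
    rw [this]
    nlinarith
  have hterm2 : ∀ j ∈ Finset.Icc 1 (N - 1) \ Γ,
      (u j : ℝ)⁻¹ ≤ (u k : ℝ) * |(u j : ℝ)⁻¹ - (u k : ℝ)⁻¹| := by
    intro j hj
    have hjS : j ∈ Finset.Icc 1 (N - 1) := (Finset.mem_sdiff.mp hj).1
    have huj : (2:ℝ) ≤ (u j : ℝ) := by exact_mod_cast hsub j hjS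
    have hujpos : (0:ℝ) < (u j : ℝ) := by linarith
    have hone : (1:ℝ) ≤ |(u k : ℝ) - (u j : ℝ)| := by
      have hne' : u j ≠ u k := hne j hj
      rcases lt_or_gt_of_ne hne' with h | h
      · have h1 : (u j : ℝ) + 1 ≤ (u k : ℝ) := by exact_mod_cast h
        rw [abs_of_nonneg (by linarith)]
        linarith
      · have h1 : (u k : ℝ) + 1 ≤ (u j : ℝ) := by exact_mod_cast h
        rw [abs_of_nonpos (by linarith)]
        linarith
    have heq : (u k : ℝ) * |(u j : ℝ)⁻¹ - (u k : ℝ)⁻¹|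
        = |(u k : ℝ) - (u j : ℝ)| / (u j : ℝ) := by
      have : (u j : ℝ)⁻¹ - (u k : ℝ)⁻¹ = ((u k : ℝ) - (u j : ℝ)) / ((u j : ℝ) * (u k : ℝ)) := by
        field_simp
      rw [this, abs_div, abs_of_pos (by positivity : (0:ℝ) < (u j : ℝ) * (u k : ℝ))]
      field_simp
    rw [heq]
    calc (u j : ℝ)⁻¹ = 1 / (u j : ℝ) := (one_div _).symm
      _ ≤ |(u k : ℝ) - (u j : ℝ)| / (u j : ℝ) := by gcongr
  -- product bounds
  have hP1 : ∏ j ∈ Γ, (u j : ℝ) ≤ ∏ j ∈ Γ, (u k : ℝ) * |(u j : ℝ) - (u k : ℝ)⁻¹| :=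
    Finset.prod_le_prod (fun j hj => by positivity) hterm1
  have hP2 : ∏ j ∈ Finset.Icc 1 (N - 1) \ Γ, (u j : ℝ)⁻¹
      ≤ ∏ j ∈ Finset.Icc 1 (N - 1) \ Γ, (u k : ℝ) * |(u j : ℝ)⁻¹ - (u k : ℝ)⁻¹| :=
    Finset.prod_le_prod (fun j hj => by positivity) hterm2
  -- key identity: product of lower bounds equals u N
  have hprodpos : (0:ℝ) < ∏ j ∈ Finset.Icc 1 (N - 1) \ Γ, (u j : ℝ) := by
    apply Finset.prod_pos
    intro j hj
    have : (2:ℝ) ≤ (u j : ℝ) := by exact_mod_cast hsub j (Finset.mem_sdiff.mp hj).1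
    linarith
  have hpartR : ∏ j ∈ Γ, (u j : ℝ)
      = (u N : ℝ) * ∏ j ∈ Finset.Icc 1 (N - 1) \ Γ, (u j : ℝ) := by
    exact_mod_cast congrArg (Nat.cast : ℕ → ℝ) hpart
  have hkey : (∏ j ∈ Γ, (u j : ℝ)) * ∏ j ∈ Finset.Icc 1 (N - 1) \ Γ, (u j : ℝ)⁻¹
      = (u N : ℝ) := by
    rw [Finset.prod_inv_distrib, hpartR]
    field_simp
  -- rewrite LHS
  have hrw : (u k : ℝ) ^ (N - 1) *
        ((∏ j ∈ Γ, |(u j : ℝ) - (u k : ℝ)⁻¹|) *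
          ∏ j ∈ Finset.Icc 1 (N - 1) \ Γ, |(u j : ℝ)⁻¹ - (u k : ℝ)⁻¹|)
      = (∏ j ∈ Γ, (u k : ℝ) * |(u j : ℝ) - (u k : ℝ)⁻¹|) *
        ∏ j ∈ Finset.Icc 1 (N - 1) \ Γ, (u k : ℝ) * |(u j : ℝ)⁻¹ - (u k : ℝ)⁻¹| := by
    have hpow : (u k : ℝ) ^ (N - 1)
        = (u k : ℝ) ^ Γ.card * (u k : ℝ) ^ (Finset.Icc 1 (N - 1) \ Γ).card := by
      rw [← pow_add, hcard]
    rw [Finset.prod_mul_distrib, Finset.prod_mul_distrib, Finset.prod_const,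
      Finset.prod_const, hpow]
    ring
  have hinvnonneg : (0:ℝ) ≤ ∏ j ∈ Finset.Icc 1 (N - 1) \ Γ, (u j : ℝ)⁻¹ := by
    positivity
  have hΓnonneg : (0:ℝ) ≤ ∏ j ∈ Γ, (u j : ℝ) := by positivity
  have hcore : (u N : ℝ) ≤ (u k : ℝ) ^ (N - 1) *
        ((∏ j ∈ Γ, |(u j : ℝ) - (u k : ℝ)⁻¹|) *
          ∏ j ∈ Finset.Icc 1 (N - 1) \ Γ, |(u j : ℝ)⁻¹ - (u k : ℝ)⁻¹|) := by
    rw [hrw, ← hkey]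
    exact mul_le_mul hP1 hP2 hinvnonneg (le_trans hΓnonneg hP1)
  have humaxpow : (0:ℝ) ≤ (umax : ℝ) ^ (N - 1) := by positivity
  rw [ge_iff_le]
  calc (umax : ℝ) ^ (N - 1) * (u N : ℝ)
      ≤ (umax : ℝ) ^ (N - 1) * ((u k : ℝ) ^ (N - 1) *
        ((∏ j ∈ Γ, |(u j : ℝ) - (u k : ℝ)⁻¹|) *
          ∏ j ∈ Finset.Icc 1 (N - 1) \ Γ, |(u j : ℝ)⁻¹ - (u k : ℝ)⁻¹|)) :=
        mul_le_mul_of_nonneg_left hcore humaxpow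
    _ = (umax : ℝ) ^ (N - 1) * (u k : ℝ) ^ (N - 1) *
        ((∏ j ∈ Γ, |(u j : ℝ) - (u k : ℝ)⁻¹|) *
          ∏ j ∈ Finset.Icc 1 (N - 1) \ Γ, |(u j : ℝ)⁻¹ - (u k : ℝ)⁻¹|) := by ring
end

section
/- Let u_1, ..., u_N \geq 2 be positive integers with u_{max} := \max\{u_1,...,u_{N-1}\}, and suppose \Gamma \subseteq \{1,...,N-1\} satisfies \prod_{k \in \Gamma} u_k = u_N \prod_{k \in \Gamma^c} u_k. Let x \in \mathbb{C}^N be the coefficient vector of the polynomial P(z) = u_{max}^{N-1} \prod_{n=1}^{N-1}(z - \beta_n), where \beta_k = -u_k if k \in \Gamma and \beta_k = -1/u_k if k \in \Gamma^c, so that P(z) = \sum_{k=0}^{N-1} x(k) z^{N-1-k}. Let y \in \mathbb{C}^N satisfy \|y - x\| \leq u_{max}^{-2N}, and let Y(w) = \sum_{k=0}^{N-1} y(k) w^{-k} be its Z-transform. Then for every k \in \{1,...,N-1\} such that 1/\beta_k is not a root of P, one has |Y(1/\beta_k)| \geq |Y(\beta_k)| + 1 - 2 u_{max}^{-N}. 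-/
private lemma geo_le (r : ℝ) (hr : 2 ≤ r) (N : ℕ) :
    ∑ j ∈ Finset.range N, r ^ j ≤ r ^ N := by
  induction N with
  | zero => simp
  | succ n ih =>
    rw [Finset.sum_range_succ, pow_succ]
    nlinarith [pow_nonneg (by linarith : (0:ℝ) ≤ r) n]

private lemma zt_flip (N : ℕ) (x : ℕ → ℂ) (w : ℂ) (hw : w ≠ 0) :
    ∑ j ∈ Finset.range N, x j * w ^ j
      = w ^ (N - 1) * ∑ j ∈ Finset.range N, x j * (w⁻¹) ^ (N - 1 - j) := by
  rw [Finset.mul_sum]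
  refine Finset.sum_congr rfl fun j hj => ?_
  have hj' : j ≤ N - 1 := by have := Finset.mem_range.mp hj; omega
  have h : w ^ (N - 1) * (w⁻¹) ^ (N - 1 - j) = w ^ j := by
    have e : w ^ (N - 1) = w ^ j * w ^ (N - 1 - j) := by
      rw [← pow_add]; congr 1; omega
    rw [e, inv_pow, mul_assoc, mul_inv_cancel₀ (pow_ne_zero _ hw), mul_one]
  rw [← h]; ring

private lemma err_bound (N : ℕ) (M : ℝ) (hM : 2 ≤ M) (c : ℕ → ℂ)
    (hc : Real.sqrt (∑ j ∈ Finset.range N, (‖c j‖) ^ 2) ≤ (M ^ (2 * N))⁻¹)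
    (v : ℂ) (hv : ‖v‖ ≤ M) :
    ‖∑ j ∈ Finset.range N, c j * v ^ j‖ ≤ (M ^ N)⁻¹ := by
  have hM0 : (0:ℝ) < M := by linarith
  have h1 : ‖∑ j ∈ Finset.range N, c j * v ^ j‖
      ≤ ∑ j ∈ Finset.range N, ‖c j‖ * (‖v‖) ^ j := by
    refine le_trans (norm_sum_le _ _) (le_of_eq ?_)
    exact Finset.sum_congr rfl fun j _ => by rw [norm_mul, norm_pow]
  have h2 := Real.sum_mul_le_sqrt_mul_sqrt (Finset.range N)
      (fun j => ‖c j‖) (fun j => (‖v‖) ^ j)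
  have h3 : Real.sqrt (∑ j ∈ Finset.range N, ((‖v‖) ^ j) ^ 2) ≤ M ^ N := by
    have hsum : ∑ j ∈ Finset.range N, ((‖v‖) ^ j) ^ 2 ≤ (M ^ N) ^ 2 := by
      have hb : ∀ j ∈ Finset.range N, ((‖v‖) ^ j) ^ 2 ≤ (M ^ 2) ^ j := by
        intro j _
        have e : ((‖v‖) ^ j) ^ 2 = ((‖v‖) ^ 2) ^ j := by ring
        rw [e]
        exact pow_le_pow_left₀ (sq_nonneg _) (by nlinarith [norm_nonneg v]) j
      calc ∑ j ∈ Finset.range N, ((‖v‖) ^ j) ^ 2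
          ≤ ∑ j ∈ Finset.range N, (M ^ 2) ^ j := Finset.sum_le_sum hb
        _ ≤ (M ^ 2) ^ N := geo_le (M ^ 2) (by nlinarith) N
        _ = (M ^ N) ^ 2 := by ring
    calc Real.sqrt (∑ j ∈ Finset.range N, ((‖v‖) ^ j) ^ 2)
        ≤ Real.sqrt ((M ^ N) ^ 2) := Real.sqrt_le_sqrt hsum
      _ = M ^ N := Real.sqrt_sq (by positivity)
  have h4 : Real.sqrt (∑ j ∈ Finset.range N, (‖c j‖) ^ 2)
      * Real.sqrt (∑ j ∈ Finset.range N, ((‖v‖) ^ j) ^ 2)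
      ≤ (M ^ (2 * N))⁻¹ * M ^ N :=
    mul_le_mul hc h3 (Real.sqrt_nonneg _) (by positivity)
  have h5 : (M ^ (2 * N))⁻¹ * M ^ N = (M ^ N)⁻¹ := by
    rw [two_mul, pow_add]
    field_simp
  linarith [le_trans h1 (le_trans h2 h4)]

private lemma factor_ge (M A B : ℝ) (hM : 2 ≤ M) (hA2 : 2 ≤ A) (hAM : A ≤ M)
    (hB2 : 2 ≤ B) (hBM : B ≤ M) (hint : A ≠ B → 1 ≤ |A - B|)
    (bk bn : ℂ) (hbk : bk = -(A:ℂ) ∨ bk = -((A:ℂ))⁻¹)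
    (hbn : bn = -(B:ℂ) ∨ bn = -((B:ℂ))⁻¹)
    (hne : bk⁻¹ - bn ≠ 0) :
    1 ≤ ‖bk‖ * (M * ‖bk⁻¹ - bn‖) := by
  have hA0 : (0:ℝ) < A := by linarith
  have hB0 : (0:ℝ) < B := by linarith
  have hAi0 : (0:ℝ) < A⁻¹ := inv_pos.mpr hA0
  have hBi0 : (0:ℝ) < B⁻¹ := inv_pos.mpr hB0
  have hAi : A⁻¹ ≤ 1/2 := by nlinarith [mul_inv_cancel₀ hA0.ne']
  have hBi : B⁻¹ ≤ 1/2 := by nlinarith [mul_inv_cancel₀ hB0.ne']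
  have hAc : (A:ℂ) ≠ 0 := by exact_mod_cast hA0.ne'
  have hBc : (B:ℂ) ≠ 0 := by exact_mod_cast hB0.ne'
  rcases hbk with hbk | hbk <;> rcases hbn with hbn | hbn
  · -- bk = -A, bn = -B
    have e1 : ‖bk‖ = A := by
      rw [hbk, show -(A:ℂ) = ((-A : ℝ) : ℂ) by push_cast; ring, Complex.norm_real, Real.norm_eq_abs]
      rw [abs_of_neg (by linarith)]; ring
    have e2 : bk⁻¹ - bn = ((B - A⁻¹ : ℝ) : ℂ) := by
      rw [hbk, hbn]; push_cast; ring
    rw [e1, e2, Complex.norm_real, Real.norm_eq_abs, abs_of_pos (by linarith)]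
    have e3 : A * (M * (B - A⁻¹)) = M * (A * B - A * A⁻¹) := by ring
    rw [e3, mul_inv_cancel₀ hA0.ne']
    have h6 : (2:ℝ) * 3 ≤ M * (A * B - 1) :=
      mul_le_mul hM (by nlinarith) (by norm_num) (by linarith)
    linarith
  · -- bk = -A, bn = -B⁻¹
    have e1 : ‖bk‖ = A := by
      rw [hbk, show -(A:ℂ) = ((-A : ℝ) : ℂ) by push_cast; ring, Complex.norm_real, Real.norm_eq_abs]
      rw [abs_of_neg (by linarith)]; ring
    have e2 : bk⁻¹ - bn = ((B⁻¹ - A⁻¹ : ℝ) : ℂ) := by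
      rw [hbk, hbn, inv_neg]; push_cast; ring
    have hABne : A ≠ B := by
      intro h; apply hne; rw [e2, h]; simp
    have hab := hint hABne
    have e4 : B⁻¹ - A⁻¹ = (A - B) / (B * A) := inv_sub_inv hB0.ne' hA0.ne'
    rw [e1, e2, Complex.norm_real, Real.norm_eq_abs, e4, abs_div, abs_of_pos (by positivity : (0:ℝ) < B * A)]
    have key : A * (M * (|A - B| / (B * A))) = M * |A - B| / B := by
      field_simp
    rw [key, le_div_iff₀ hB0]
    nlinarith [abs_nonneg (A - B)]
  · -- bk = -A⁻¹, bn = -B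
    have e1 : ‖bk‖ = A⁻¹ := by
      rw [hbk, show -((A:ℂ))⁻¹ = ((-A⁻¹ : ℝ) : ℂ) by push_cast; ring, Complex.norm_real, Real.norm_eq_abs]
      rw [abs_of_neg (by linarith)]; ring
    have e2 : bk⁻¹ - bn = ((B - A : ℝ) : ℂ) := by
      rw [hbk, hbn, inv_neg, inv_inv]; push_cast; ring
    have hABne : A ≠ B := by
      intro h; apply hne; rw [e2, h]; simp
    have hab := hint hABne
    rw [e1, e2, Complex.norm_real, Real.norm_eq_abs, abs_sub_comm]
    have key : A⁻¹ * (M * |A - B|) = M * |A - B| / A := by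
      field_simp
    rw [key, le_div_iff₀ hA0]
    nlinarith [abs_nonneg (A - B)]
  · -- bk = -A⁻¹, bn = -B⁻¹
    have e1 : ‖bk‖ = A⁻¹ := by
      rw [hbk, show -((A:ℂ))⁻¹ = ((-A⁻¹ : ℝ) : ℂ) by push_cast; ring, Complex.norm_real, Real.norm_eq_abs]
      rw [abs_of_neg (by linarith)]; ring
    have e2 : bk⁻¹ - bn = ((B⁻¹ - A : ℝ) : ℂ) := by
      rw [hbk, hbn, inv_neg, inv_inv]; push_cast; ring
    rw [e1, e2, Complex.norm_real, Real.norm_eq_abs, abs_of_neg (by linarith)]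
    have e3 : A⁻¹ * (M * -(B⁻¹ - A)) = M * (A * A⁻¹) - M * (A⁻¹ * B⁻¹) := by ring
    rw [e3, mul_inv_cancel₀ hA0.ne']
    have h4 : A⁻¹ * B⁻¹ ≤ 1/4 := by nlinarith
    nlinarith

/-- Lemma 3.1(i): product partition construction. If `y` is
`u_max^{-2N}`-close to the constructed signal `x`, then for every `k ∈ {1,…,N-1}`
such that `1/βₖ` is not a root of the Z-transform of `x`, the Z-transform `X_m` of `y`
satisfies `|X_m(1/βₖ)| ≥ |X_m(βₖ)| + 1 - 2 u_max^{-N}`. -/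
theorem stmt_11 (N : ℕ) (u : ℕ → ℕ) (hu : ∀ j ∈ Finset.Icc 1 N, 2 ≤ u j)
    (Γ : Finset ℕ) (hΓ : Γ ⊆ Finset.Icc 1 (N - 1))
    (hpart : ∏ j ∈ Γ, u j = u N * ∏ j ∈ Finset.Icc 1 (N - 1) \ Γ, u j)
    (umax : ℕ) (humax : umax = (Finset.Icc 1 (N - 1)).sup u)
    (β : ℕ → ℂ)
    (hβ : ∀ j ∈ Finset.Icc 1 (N - 1),
      β j = if j ∈ Γ then -(u j : ℂ) else -((u j : ℂ))⁻¹)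
    (x : ℕ → ℂ) (hx0 : x 0 = (umax : ℂ) ^ (N - 1))
    (hxfac : ∀ z : ℂ, ∑ j ∈ Finset.range N, x j * z ^ (N - 1 - j)
      = (umax : ℂ) ^ (N - 1) * ∏ n ∈ Finset.Icc 1 (N - 1), (z - β n))
    (y : ℕ → ℂ)
    (hclose : Real.sqrt (∑ j ∈ Finset.range N, (‖y j - x j‖) ^ 2)
      ≤ ((umax : ℝ) ^ (2 * N))⁻¹)
    (Xm : ℂ → ℂ)
    (hXm : ∀ w : ℂ, Xm w = ∑ j ∈ Finset.range N, y j * (w⁻¹) ^ j)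
    (k : ℕ) (hk : k ∈ Finset.Icc 1 (N - 1))
    (hnotroot : ∑ j ∈ Finset.range N, x j * ((β k)⁻¹) ^ (N - 1 - j) ≠ 0) :
    ‖Xm ((β k)⁻¹)‖
      ≥ ‖Xm (β k)‖ + 1 - 2 * ((umax : ℝ) ^ N)⁻¹ := by
  classical
  obtain ⟨hk1, hk2⟩ := Finset.mem_Icc.mp hk
  have hN2 : 2 ≤ N := by omega
  have hu2 : ∀ n ∈ Finset.Icc 1 (N - 1), 2 ≤ u n := by
    intro n hn
    refine hu n ?_
    rw [Finset.mem_Icc] at hn ⊢; omega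
  have huM : ∀ n ∈ Finset.Icc 1 (N - 1), u n ≤ umax := by
    intro n hn; rw [humax]; exact Finset.le_sup hn
  set M : ℝ := (umax : ℝ) with hMdef
  have hM2 : (2 : ℝ) ≤ M := by
    have h1 := hu2 k hk
    have h2 := huM k hk
    show (2 : ℝ) ≤ (umax : ℝ)
    exact_mod_cast le_trans h1 h2
  have hM0 : (0 : ℝ) < M := by linarith
  -- real value of u k
  have hA2 : (2 : ℝ) ≤ (u k : ℝ) := by exact_mod_cast hu2 k hk
  have hA0 : (0 : ℝ) < (u k : ℝ) := by linarith
  have hAM : (u k : ℝ) ≤ M := by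
    show (u k : ℝ) ≤ (umax : ℝ)
    exact_mod_cast huM k hk
  -- β k in the two possible shapes
  have hbkshape : β k = -(((u k : ℝ)) : ℂ) ∨ β k = -((((u k : ℝ)) : ℂ))⁻¹ := by
    rw [hβ k hk]
    split_ifs
    · left; push_cast; ring
    · right; push_cast; ring
  have hbk0 : β k ≠ 0 := by
    have hc : (((u k : ℝ)) : ℂ) ≠ 0 := by
      simp only [ne_eq, Complex.ofReal_eq_zero]; linarith
    rcases hbkshape with h | h <;> rw [h]
    · exact neg_ne_zero.mpr hc
    · exact neg_ne_zero.mpr (inv_ne_zero hc)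
  -- |β k| is u k or its inverse
  have habsk : ‖β k‖ = (u k : ℝ) ∨ ‖β k‖ = ((u k : ℝ))⁻¹ := by
    rcases hbkshape with h | h
    · left
      rw [h, show -(((u k : ℝ)) : ℂ) = ((-(u k : ℝ) : ℝ) : ℂ) by push_cast; ring,
        Complex.norm_real, Real.norm_eq_abs, abs_of_neg (by linarith)]
      ring
    · right
      rw [h, show -((((u k : ℝ)) : ℂ))⁻¹ = (((-(u k : ℝ)⁻¹ : ℝ)) : ℂ) by push_cast; ring,
        Complex.norm_real, Real.norm_eq_abs, abs_of_neg (by have := inv_pos.mpr hA0; linarith)]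
      ring
  have hki : ((u k : ℝ))⁻¹ ≤ M := by
    have : ((u k : ℝ))⁻¹ ≤ 1 := by
      rw [inv_le_one_iff₀]; right; linarith
    linarith
  have habsk_le : ‖β k‖ ≤ M := by
    rcases habsk with h | h <;> rw [h]
    · exact hAM
    · exact hki
  have habski_le : ‖(β k)⁻¹‖ ≤ M := by
    rw [norm_inv]
    rcases habsk with h | h <;> rw [h]
    · exact hki
    · rw [inv_inv]; exact hAM
  -- the factorization of X at (β k)⁻¹
  have hfac := hxfac ((β k)⁻¹)
  have hprod_ne : ∀ n ∈ Finset.Icc 1 (N - 1), (β k)⁻¹ - β n ≠ 0 := by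
    rw [hfac] at hnotroot
    have h := right_ne_zero_of_mul hnotroot
    intro n hn
    exact Finset.prod_ne_zero_iff.mp h n hn
  -- X vanishes at β k
  have hX2 : ∑ j ∈ Finset.range N, x j * ((β k)⁻¹) ^ j = 0 := by
    have h := zt_flip N x ((β k)⁻¹) (inv_ne_zero hbk0)
    rw [h]
    simp only [inv_inv]
    rw [hxfac (β k)]
    have : ∏ n ∈ Finset.Icc 1 (N - 1), (β k - β n) = 0 :=
      Finset.prod_eq_zero hk (sub_self _)
    rw [this]
    ring
  -- X at (β k)⁻¹ (i.e. ∑ x j (β k)^j) has absolute value ≥ 1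
  have hX1 : (1 : ℝ) ≤ ‖∑ j ∈ Finset.range N, x j * (β k) ^ j‖ := by
    have h := zt_flip N x (β k) hbk0
    rw [h, hfac]
    have hcard : (Finset.Icc 1 (N - 1)).card = N - 1 := by
      rw [Nat.card_Icc]; omega
    -- pointwise factor bound
    have hfactor : ∀ n ∈ Finset.Icc 1 (N - 1),
        (1 : ℝ) ≤ ‖β k‖ * (M * ‖(β k)⁻¹ - β n‖) := by
      intro n hn
      have hB2 : (2 : ℝ) ≤ (u n : ℝ) := by exact_mod_cast hu2 n hn
      have hBM : (u n : ℝ) ≤ M := by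
        show (u n : ℝ) ≤ (umax : ℝ)
        exact_mod_cast huM n hn
      have hint : (u k : ℝ) ≠ (u n : ℝ) → 1 ≤ |(u k : ℝ) - (u n : ℝ)| := by
        intro hne
        have hne' : u k ≠ u n := by
          intro e; exact hne (by exact_mod_cast congrArg (fun m : ℕ => (m : ℝ)) e)
        have hor : u k < u n ∨ u n < u k := by omega
        rcases hor with hlt | hlt
        · have h1 : (u k : ℝ) + 1 ≤ (u n : ℝ) := by exact_mod_cast hlt
          calc (1 : ℝ) ≤ (u n : ℝ) - (u k : ℝ) := by linarith
            _ = |(u n : ℝ) - (u k : ℝ)| := (abs_of_pos (by linarith)).symm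
            _ = |(u k : ℝ) - (u n : ℝ)| := abs_sub_comm _ _
        · have h1 : (u n : ℝ) + 1 ≤ (u k : ℝ) := by exact_mod_cast hlt
          calc (1 : ℝ) ≤ (u k : ℝ) - (u n : ℝ) := by linarith
            _ = |(u k : ℝ) - (u n : ℝ)| := (abs_of_pos (by linarith)).symm
      have hbnshape : β n = -(((u n : ℝ)) : ℂ) ∨ β n = -((((u n : ℝ)) : ℂ))⁻¹ := by
        rw [hβ n hn]
        split_ifs
        · left; push_cast; ring
        · right; push_cast; ring
      exact factor_ge M (u k : ℝ) (u n : ℝ) hM2 hA2 hAM hB2 hBM hint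
        (β k) (β n) hbkshape hbnshape (hprod_ne n hn)
    have hprodge : (1 : ℝ) ≤ ∏ n ∈ Finset.Icc 1 (N - 1),
        (‖β k‖ * (M * ‖(β k)⁻¹ - β n‖)) := by
      have h := Finset.prod_le_prod (f := fun _ : ℕ => (1 : ℝ))
        (g := fun n => ‖β k‖ * (M * ‖(β k)⁻¹ - β n‖))
        (fun i _ => zero_le_one) (fun i hi => hfactor i hi)
      simpa using h
    have hprodeq : ∏ n ∈ Finset.Icc 1 (N - 1),
        (‖β k‖ * (M * ‖(β k)⁻¹ - β n‖))
        = (‖β k‖) ^ (N - 1) * (M ^ (N - 1)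
          * ∏ n ∈ Finset.Icc 1 (N - 1), ‖(β k)⁻¹ - β n‖) := by
      rw [Finset.prod_mul_distrib, Finset.prod_mul_distrib,
        Finset.prod_const, Finset.prod_const, hcard]
    have habs : ‖(β k) ^ (N - 1) * ((umax : ℂ) ^ (N - 1)
        * ∏ n ∈ Finset.Icc 1 (N - 1), ((β k)⁻¹ - β n))‖
        = (‖β k‖) ^ (N - 1) * (M ^ (N - 1)
          * ∏ n ∈ Finset.Icc 1 (N - 1), ‖(β k)⁻¹ - β n‖) := by
      rw [norm_mul, norm_mul, norm_pow, norm_pow, norm_prod]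
      simp [hMdef]
    rw [habs, ← hprodeq]
    exact hprodge
  -- error bounds
  have herr1 : ‖∑ j ∈ Finset.range N, (y j - x j) * (β k) ^ j‖
      ≤ (M ^ N)⁻¹ :=
    err_bound N M hM2 (fun j => y j - x j) hclose (β k) habsk_le
  have herr2 : ‖∑ j ∈ Finset.range N, (y j - x j) * ((β k)⁻¹) ^ j‖
      ≤ (M ^ N)⁻¹ :=
    err_bound N M hM2 (fun j => y j - x j) hclose ((β k)⁻¹) habski_le
  -- identify X_m values
  have hXm1 : Xm ((β k)⁻¹) = ∑ j ∈ Finset.range N, y j * (β k) ^ j := by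
    rw [hXm]; simp only [inv_inv]
  have hXm2 : Xm (β k) = ∑ j ∈ Finset.range N, y j * ((β k)⁻¹) ^ j := by
    rw [hXm]
  -- difference decompositions
  have hd1 : (∑ j ∈ Finset.range N, y j * (β k) ^ j)
      - (∑ j ∈ Finset.range N, x j * (β k) ^ j)
      = ∑ j ∈ Finset.range N, (y j - x j) * (β k) ^ j := by
    rw [← Finset.sum_sub_distrib]
    exact Finset.sum_congr rfl fun j _ => by ring
  have hd2 : (∑ j ∈ Finset.range N, y j * ((β k)⁻¹) ^ j)
      - (∑ j ∈ Finset.range N, x j * ((β k)⁻¹) ^ j)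
      = ∑ j ∈ Finset.range N, (y j - x j) * ((β k)⁻¹) ^ j := by
    rw [← Finset.sum_sub_distrib]
    exact Finset.sum_congr rfl fun j _ => by ring
  -- triangle inequalities
  have t1 : (1 : ℝ) - (M ^ N)⁻¹ ≤ ‖Xm ((β k)⁻¹)‖ := by
    rw [hXm1]
    set T := ∑ j ∈ Finset.range N, y j * (β k) ^ j
    set X1 := ∑ j ∈ Finset.range N, x j * (β k) ^ j
    have htri : ‖X1‖ - ‖T‖ ≤ ‖X1 - T‖ := by
      have := norm_sub_norm_le X1 T
      simpa using this
    have : ‖X1 - T‖ = ‖T - X1‖ := by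
      rw [← norm_neg (X1 - T)]; congr 1; ring
    rw [this, hd1] at htri
    linarith
  have t2 : ‖Xm (β k)‖ ≤ (M ^ N)⁻¹ := by
    rw [hXm2]
    set T := ∑ j ∈ Finset.range N, y j * ((β k)⁻¹) ^ j
    set X2 := ∑ j ∈ Finset.range N, x j * ((β k)⁻¹) ^ j
    have htri : ‖T‖ - ‖X2‖ ≤ ‖T - X2‖ := by
      have := norm_sub_norm_le T X2
      simpa using this
    rw [hd2] at htri
    have : ‖X2‖ = 0 := by rw [hX2]; simp
    linarith
  have hgoal : ‖Xm (β k)‖ + 1 - 2 * (M ^ N)⁻¹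
      ≤ ‖Xm ((β k)⁻¹)‖ := by linarith
  exact hgoal
end

section
/- In the setting of the previous lemma (product partition construction with \|y - x\| \leq u_{max}^{-2N}): if both \beta_k and 1/\beta_k are roots of the Z-transform X of x, then \max(|X_m(\beta_k)|, |X_m(1/\beta_k)|) \leq u_{max}^{-N}, where X_m is the Z-transform of y. -/
lemma geom_le_pow (c : ℝ) (hc : 2 ≤ c) (n : ℕ) :
    ∑ j ∈ Finset.range n, c ^ j ≤ c ^ n := by
  induction n with
  | zero => simp
  | succ n ih =>
    rw [Finset.sum_range_succ, pow_succ]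
    nlinarith [pow_nonneg (by linarith : (0:ℝ) ≤ c) n]

/-- Lemma 3.1(ii): in the product partition construction, if both `βₖ`
and `1/βₖ` are roots of the Z-transform of `x`, then the Z-transform `X_m` of the
`u_max^{-2N}`-close vector `y` satisfies
`max(|X_m(βₖ)|, |X_m(1/βₖ)|) ≤ u_max^{-N}`. -/
theorem stmt_12 (N : ℕ) (u : ℕ → ℕ) (hu : ∀ j ∈ Finset.Icc 1 N, 2 ≤ u j)
    (Γ : Finset ℕ) (hΓ : Γ ⊆ Finset.Icc 1 (N - 1))
    (hpart : ∏ j ∈ Γ, u j = u N * ∏ j ∈ Finset.Icc 1 (N - 1) \ Γ, u j)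
    (umax : ℕ) (humax : umax = (Finset.Icc 1 (N - 1)).sup u)
    (β : ℕ → ℂ)
    (hβ : ∀ j ∈ Finset.Icc 1 (N - 1),
      β j = if j ∈ Γ then -(u j : ℂ) else -((u j : ℂ))⁻¹)
    (x : ℕ → ℂ) (hx0 : x 0 = (umax : ℂ) ^ (N - 1))
    (hxfac : ∀ z : ℂ, ∑ j ∈ Finset.range N, x j * z ^ (N - 1 - j)
      = (umax : ℂ) ^ (N - 1) * ∏ n ∈ Finset.Icc 1 (N - 1), (z - β n))
    (y : ℕ → ℂ)
    (hclose : Real.sqrt (∑ j ∈ Finset.range N, (‖y j - x j‖) ^ 2)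
      ≤ ((umax : ℝ) ^ (2 * N))⁻¹)
    (Xm : ℂ → ℂ)
    (hXm : ∀ w : ℂ, Xm w = ∑ j ∈ Finset.range N, y j * (w⁻¹) ^ j)
    (k : ℕ) (hk : k ∈ Finset.Icc 1 (N - 1))
    (hroot1 : ∑ j ∈ Finset.range N, x j * (β k) ^ (N - 1 - j) = 0)
    (hroot2 : ∑ j ∈ Finset.range N, x j * ((β k)⁻¹) ^ (N - 1 - j) = 0) :
    max (‖Xm (β k)‖) (‖Xm ((β k)⁻¹)‖)
      ≤ ((umax : ℝ) ^ N)⁻¹ := by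
  obtain ⟨hk1, hk2⟩ := Finset.mem_Icc.mp hk
  have huk : 2 ≤ u k := hu k (Finset.mem_Icc.mpr ⟨hk1, by omega⟩)
  have hum : u k ≤ umax := humax ▸ Finset.le_sup hk
  have humax2 : 2 ≤ umax := le_trans huk hum
  have hU : (2:ℝ) ≤ (umax : ℝ) := by exact_mod_cast humax2
  have hUk : (2:ℝ) ≤ (u k : ℝ) := by exact_mod_cast huk
  have hUkU : (u k : ℝ) ≤ (umax : ℝ) := by exact_mod_cast hum
  have hUpos : (0:ℝ) < (umax : ℝ) := by linarith
  -- each coordinate of y - x is small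
  have hdj : ∀ j ∈ Finset.range N, ‖y j - x j‖ ≤ ((umax : ℝ) ^ (2 * N))⁻¹ := by
    intro j hj
    have h1 : (‖y j - x j‖) ^ 2
        ≤ ∑ i ∈ Finset.range N, (‖y i - x i‖) ^ 2 :=
      Finset.single_le_sum (f := fun i => (‖y i - x i‖) ^ 2)
        (fun i _ => sq_nonneg _) hj
    have h2 : ‖y j - x j‖
        ≤ Real.sqrt (∑ i ∈ Finset.range N, (‖y i - x i‖) ^ 2) := by
      have := Real.sqrt_le_sqrt h1
      rwa [Real.sqrt_sq (norm_nonneg _)] at this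
    linarith
  -- the value of β k
  have hβk := hβ k hk
  have hβabs : ‖β k‖ = (u k : ℝ) ∨ ‖β k‖ = ((u k : ℝ))⁻¹ := by
    by_cases hkΓ : k ∈ Γ
    · left; rw [hβk, if_pos hkΓ]; simp
    · right; rw [hβk, if_neg hkΓ]; simp
  have hukC : (u k : ℂ) ≠ 0 := by
    exact_mod_cast (by omega : u k ≠ 0)
  have hβne : β k ≠ 0 := by
    rw [hβk]; split <;> simp [hukC]
  have hinv : ((u k : ℝ))⁻¹ ≤ (u k : ℝ) :=
    le_trans (inv_le_one_of_one_le₀ (by linarith)) (by linarith)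
  -- transfer the root conditions
  have hroot' : ∀ w : ℂ, w ≠ 0 →
      (∑ j ∈ Finset.range N, x j * w ^ (N - 1 - j) = 0) →
      ∑ j ∈ Finset.range N, x j * (w⁻¹) ^ j = 0 := by
    intro w hw h
    have key : ∑ j ∈ Finset.range N, x j * (w⁻¹) ^ j
        = (w⁻¹) ^ (N - 1) * ∑ j ∈ Finset.range N, x j * w ^ (N - 1 - j) := by
      rw [Finset.mul_sum]
      refine Finset.sum_congr rfl fun j hj => ?_
      have hjN : j ≤ N - 1 := by
        have := Finset.mem_range.mp hj; omega
      have hpow : (w⁻¹) ^ j = (w⁻¹) ^ (N - 1) * w ^ (N - 1 - j) := by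
        have hsplit : w ^ (N - 1) = w ^ (N - 1 - j) * w ^ j := by
          rw [← pow_add]; congr 1; omega
        rw [inv_pow, inv_pow, hsplit, mul_inv]
        field_simp
      rw [hpow]; ring
    rw [key, h, mul_zero]
  -- main estimate
  have bound : ∀ w : ℂ, ‖w⁻¹‖ ≤ (u k : ℝ) →
      (∑ j ∈ Finset.range N, x j * (w⁻¹) ^ j = 0) →
      ‖Xm w‖ ≤ ((umax : ℝ) ^ N)⁻¹ := by
    intro w hw h0
    rw [hXm]
    have hsplit : ∑ j ∈ Finset.range N, y j * (w⁻¹) ^ j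
        = ∑ j ∈ Finset.range N, (y j - x j) * (w⁻¹) ^ j := by
      rw [← sub_eq_zero, ← Finset.sum_sub_distrib, ← h0]
      refine Finset.sum_congr rfl fun j _ => by ring
    rw [hsplit]
    calc ‖∑ j ∈ Finset.range N, (y j - x j) * (w⁻¹) ^ j‖
        ≤ ∑ j ∈ Finset.range N, ‖(y j - x j) * (w⁻¹) ^ j‖ :=
          norm_sum_le _ _
      _ ≤ ∑ j ∈ Finset.range N, ((umax : ℝ) ^ (2 * N))⁻¹ * (u k : ℝ) ^ j := by
          refine Finset.sum_le_sum fun j hj => ?_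
          rw [norm_mul, norm_pow]
          exact mul_le_mul (hdj j hj)
            (pow_le_pow_left₀ (norm_nonneg _) hw j)
            (pow_nonneg (norm_nonneg _) j)
            (inv_nonneg.mpr (pow_nonneg (le_of_lt hUpos) _))
      _ = ((umax : ℝ) ^ (2 * N))⁻¹ * ∑ j ∈ Finset.range N, (u k : ℝ) ^ j := by
          rw [Finset.mul_sum]
      _ ≤ ((umax : ℝ) ^ (2 * N))⁻¹ * (umax : ℝ) ^ N := by
          refine mul_le_mul_of_nonneg_left ?_
            (inv_nonneg.mpr (pow_nonneg (le_of_lt hUpos) _))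
          calc ∑ j ∈ Finset.range N, (u k : ℝ) ^ j ≤ (u k : ℝ) ^ N :=
                geom_le_pow _ hUk N
            _ ≤ (umax : ℝ) ^ N := pow_le_pow_left₀ (by linarith) hUkU N
      _ = ((umax : ℝ) ^ N)⁻¹ := by
          rw [two_mul, pow_add, mul_inv]
          field_simp
  -- compute the two absolute values
  have habs1 : ‖(β k)⁻¹‖ ≤ (u k : ℝ) := by
    rw [norm_inv]
    rcases hβabs with h' | h' <;> rw [h']
    · exact hinv
    · rw [inv_inv]
  have habs2 : ‖((β k)⁻¹)⁻¹‖ ≤ (u k : ℝ) := by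
    rw [inv_inv]
    rcases hβabs with h' | h' <;> rw [h']
    exact hinv
  refine max_le ?_ ?_
  · exact bound (β k) habs1 (hroot' (β k) hβne hroot1)
  · exact bound ((β k)⁻¹) habs2 (hroot' ((β k)⁻¹) (inv_ne_zero hβne) hroot2)
end

section
/- Let \gamma_1, ..., \gamma_{N-1} be nonzero complex numbers and c > 0. Suppose x \in \mathbb{C}^N has Z-transform X(z) = z^{-N+1} e^{i\alpha} \sqrt{c} \prod_{n=1}^{N-1} |\beta_n|^{-1/2} (z - \beta_n), where each \beta_n \in \{\gamma_n, \overline{\gamma_n}^{-1}\} and \alpha \in \mathbb{R}. Then |X(z)|^2 = |z^{-N+1} c \prod_{n=1}^{N-1} (z-\gamma_n)(z-\overline{\gamma_n}^{-1})| for all z on the unit circle. In particular, all 2^{N-1} choices of \beta_n yield signals with identical Fourier magnitudes. -/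
lemma key_abs (z γ : ℂ) (hz : ‖z‖ = 1) (hγ : γ ≠ 0) :
    ‖z - ((starRingEnd ℂ) γ)⁻¹‖ = ‖z - γ‖ / ‖γ‖ := by
  have hz0 : z ≠ 0 := by intro h; simp [h] at hz
  have hconj : (starRingEnd ℂ) z = z⁻¹ := (Complex.inv_eq_conj hz).symm
  calc ‖z - ((starRingEnd ℂ) γ)⁻¹‖
      = ‖(starRingEnd ℂ) (z - ((starRingEnd ℂ) γ)⁻¹)‖ :=
        (Complex.norm_conj _).symm
    _ = ‖z⁻¹ - γ⁻¹‖ := by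
        rw [map_sub, map_inv₀, Complex.conj_conj, hconj]
    _ = ‖(γ - z) / (z * γ)‖ := by
        rw [inv_sub_inv hz0 hγ]
    _ = ‖z - γ‖ / ‖γ‖ := by
        rw [norm_div, norm_mul, hz, one_mul, ← norm_neg, neg_sub]

/-- Given nonzero `γ₁,…,γ_{N-1}`, `c > 0`, `α ∈ ℝ`, and any choice
`βₙ ∈ {γₙ, conj(γₙ)⁻¹}`, the function
`X(z) = z^{-(N-1)} e^{iα} √c ∏ₙ |βₙ|^{-1/2} (z - βₙ)` satisfies, for all `z` on the
unit circle, `|X(z)|² = |z^{-(N-1)} c ∏ₙ (z - γₙ)(z - conj(γₙ)⁻¹)|`; in particular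
all `2^{N-1}` choices of the `βₙ` yield identical Fourier magnitudes. -/
theorem stmt_18 (N : ℕ) (hN : 1 ≤ N) (γ : ℕ → ℂ)
    (hγ : ∀ n ∈ Finset.Icc 1 (N - 1), γ n ≠ 0)
    (c : ℝ) (hc : 0 < c) (α : ℝ) (β : ℕ → ℂ)
    (hβ : ∀ n ∈ Finset.Icc 1 (N - 1), β n = γ n ∨ β n = ((starRingEnd ℂ) (γ n))⁻¹)
    (X : ℂ → ℂ)
    (hX : ∀ z : ℂ, X z = (z⁻¹) ^ (N - 1) * Complex.exp (Complex.I * α) *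
      (Real.sqrt c : ℂ) *
      ∏ n ∈ Finset.Icc 1 (N - 1),
        ((Real.sqrt ‖β n‖ : ℂ))⁻¹ * (z - β n)) :
    ∀ z : ℂ, ‖z‖ = 1 →
      (‖X z‖) ^ 2
        = ‖(z⁻¹) ^ (N - 1) * (c : ℂ) *
            ∏ n ∈ Finset.Icc 1 (N - 1),
              (z - γ n) * (z - ((starRingEnd ℂ) (γ n))⁻¹)‖ := by
  intro z hz
  have hzinv : ‖z⁻¹‖ = 1 := by rw [norm_inv, hz]; norm_num
  have hexp : ‖Complex.exp (Complex.I * α)‖ = 1 := by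
    rw [Complex.norm_exp]
    simp [Complex.mul_re]
  have hsc : ‖((Real.sqrt c : ℝ) : ℂ)‖ = Real.sqrt c := by
    rw [Complex.norm_real, Real.norm_eq_abs, abs_of_nonneg (Real.sqrt_nonneg c)]
  rw [hX z]
  simp only [norm_mul, norm_pow, hzinv, one_pow, hexp, hsc, one_mul,
    Complex.norm_real, Real.norm_eq_abs, abs_of_pos hc, norm_prod, mul_pow, Real.sq_sqrt hc.le,
    ← Finset.prod_pow]
  congr 1
  refine Finset.prod_congr rfl ?_
  intro n hn
  have hγn := hγ n hn
  have hkey := key_abs z (γ n) hz hγn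
  have habspos : 0 < ‖γ n‖ := by
    simpa [norm_pos_iff] using hγn
  have hs : ∀ w : ℂ, ‖((↑(Real.sqrt ‖w‖) : ℂ))⁻¹‖ ^ 2
      = (‖w‖)⁻¹ := by
    intro w
    rw [norm_inv, Complex.norm_real, Real.norm_eq_abs, abs_of_nonneg (Real.sqrt_nonneg _),
      inv_pow, Real.sq_sqrt (norm_nonneg _)]
  rcases hβ n hn with h | h <;> rw [h]
  · rw [hs, hkey]
    field_simp
  · rw [hs, hkey, norm_inv, Complex.norm_conj, inv_inv]
    field_simp
end
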